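/- Let t, h, c₁, c₂ be fixed reals with h > 0, and let z₀, z₁, z₂, z₃ be distinct nonzero reals. Suppose perturbed values ẑᵢ satisfy ẑ₀ = z₀ + O(h⁵), ẑ₁ = z₁ + O(h³), ẑ₂ = z₂ + O(h³), ẑ₃ = z₃ + O(h⁵) (i.e., |ẑᵢ - zᵢ| ≤ Cᵢ h^{pᵢ} with p₀ = p₃ = 5, p₁ = p₂ = 3, for h small enough that the ẑᵢ remain distinct and nonzero). Then the value at 0 of the cubic Lagrange interpolation polynomial through the nodes (ẑᵢ, tᵢ) (where t₀ = t, t₁ = t + c₁h, t₂ = t + c₂h, t₃ = t + h) differs from the value at 0 of the polynomial through ((zᵢ), (tᵢ)) by O(h³): there exist constants C, h₀ > 0 such that the difference is bounded by C h³ for all 0 < h < h₀. -/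

import Mathlib

/-! The Lagrange weights `∏_{j ≠ i} (x - v j) / (v i - v j)` are smooth functions of the nodes `v`
near any injective `z`, so moving the nodes by `O(h³)` moves every weight by `O(h³)`. The times
`tᵢ` stay bounded as `h → 0⁺`, hence the interpolated value moves by `O(h³)` as well. -/

open Finset Filter Topology Asymptotics

def lagrangeWeight {𝕜 ι : Type*} [Field 𝕜] [Fintype ι] [DecidableEq ι]
    (x : 𝕜) (v : ι → 𝕜) (i : ι) : 𝕜 :=
  ∏ j ∈ univ.erase i, (x - v j) / (v i - v j)

section

variable {𝕜 ι : Type*} [NontriviallyNormedField 𝕜] [Fintype ι] [DecidableEq ι]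

theorem contDiffAt_lagrangeWeight {n : WithTop ℕ∞} (x : 𝕜) {z : ι → 𝕜}
    (hz : Function.Injective z) (i : ι) :
    ContDiffAt 𝕜 n (fun v => lagrangeWeight x v i) z := by
  refine contDiffAt_prod fun j hj => ?_
  have hden : z i - z j ≠ 0 := sub_ne_zero.2 (hz.ne (ne_of_mem_erase hj).symm)
  exact ContDiffAt.div (by fun_prop) (by fun_prop) hden

theorem isBigO_sum_lagrangeWeight_mul_sub {α : Type*} {l : Filter α} (x : 𝕜) {z : ι → 𝕜}
    (hz : Function.Injective z) {v : α → ι → 𝕜} {g : α → ℝ} {y : ι → α → 𝕜}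
    (hv : (fun a => v a - z) =O[l] g) (hg : Tendsto g l (𝓝 0))
    (hy : ∀ i, y i =O[l] (fun _ => (1 : ℝ))) :
    (fun a => ∑ i, lagrangeWeight x (v a) i * y i a - ∑ i, lagrangeWeight x z i * y i a)
      =O[l] g := by
  have hvz : Tendsto v l (𝓝 z) := tendsto_sub_nhds_zero_iff.1 (hv.trans_tendsto hg)
  have hw (i : ι) : (fun a => lagrangeWeight x (v a) i - lagrangeWeight x z i) =O[l] g :=
    have hdiff := (contDiffAt_lagrangeWeight (n := 1) x hz i).differentiableAt one_ne_zero
    (hdiff.hasFDerivAt.isBigO_sub.comp_tendsto hvz).trans hv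
  simp_rw [← sum_sub_distrib, ← sub_mul]
  exact IsBigO.fun_sum fun i _ => by simpa using (hw i).mul (hy i)

end

theorem isBigO_nhdsGT_pow_of_abs_le {f : ℝ → ℝ} {C : ℝ} {p q : ℕ}
    (hf : ∀ h, 0 < h → |f h| ≤ C * h ^ p) (hqp : q ≤ p) :
    f =O[𝓝[>] 0] (fun h => h ^ q) := by
  refine IsBigO.of_bound |C| ?_
  filter_upwards [Ioo_mem_nhdsGT one_pos] with h ⟨h0, h1⟩
  rw [Real.norm_eq_abs, Real.norm_eq_abs, abs_of_pos (pow_pos h0 q)]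
  calc |f h| ≤ C * h ^ p := hf h h0
    _ ≤ |C| * h ^ p := by gcongr; exact le_abs_self C
    _ ≤ |C| * h ^ q :=
      mul_le_mul_of_nonneg_left (pow_le_pow_of_le_one h0.le h1.le hqp) (abs_nonneg C)

theorem exists_abs_le_mul_pow_of_isBigO_nhdsGT {f : ℝ → ℝ} {n : ℕ}
    (hf : f =O[𝓝[>] 0] (fun h => h ^ n)) :
    ∃ C h₀ : ℝ, 0 < C ∧ 0 < h₀ ∧ ∀ h, 0 < h → h < h₀ → |f h| ≤ C * h ^ n := by
  obtain ⟨C, hC, hCf⟩ := hf.exists_pos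
  obtain ⟨h₀, hh₀, hbound⟩ := (nhdsGT_basis (0 : ℝ)).eventually_iff.1 hCf.bound
  refine ⟨C, h₀, hC, hh₀, fun h h0 hlt => ?_⟩
  simpa [abs_of_pos h0] using hbound ⟨h0, hlt⟩

theorem stmt_8_general (t c₁ c₂ : ℝ) (z : Fin 4 → ℝ)
    (hzinj : Function.Injective z)
    (zh : Fin 4 → ℝ → ℝ) (p : Fin 4 → ℕ)
    (hp : p 0 = 5 ∧ p 1 = 3 ∧ p 2 = 3 ∧ p 3 = 5)
    (Cb : Fin 4 → ℝ)
    (hCb : ∀ i h, 0 < h → |zh i h - z i| ≤ Cb i * h ^ p i)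
    (tn : Fin 4 → ℝ → ℝ)
    (htn : ∀ h, tn 0 h = t ∧ tn 1 h = t + c₁ * h ∧ tn 2 h = t + c₂ * h ∧ tn 3 h = t + h) :
    ∃ C h₀ : ℝ, 0 < C ∧ 0 < h₀ ∧ ∀ h, 0 < h → h < h₀ →
      |(∑ i, (∏ j ∈ Finset.univ.erase i, (0 - zh j h) / (zh i h - zh j h)) * tn i h) -
       (∑ i, (∏ j ∈ Finset.univ.erase i, (0 - z j) / (z i - z j)) * tn i h)| ≤ C * h ^ 3 := by
  have htn_affine : ∀ i, ∃ c, tn i = fun h => t + c * h := by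
    intro i
    fin_cases i
    exacts [⟨0, funext fun h => by simp [(htn h).1]⟩, ⟨c₁, funext fun h => (htn h).2.1⟩,
      ⟨c₂, funext fun h => (htn h).2.2.1⟩, ⟨1, funext fun h => by simp [(htn h).2.2.2]⟩]
  have htn_bdd : ∀ i, tn i =O[𝓝[>] 0] (fun _ => (1 : ℝ)) := fun i => by
    obtain ⟨c, hc⟩ := htn_affine i
    rw [hc]
    exact ((Continuous.tendsto (by fun_prop) 0).isBigO_one ℝ).mono nhdsWithin_le_nhds
  have hzh : (fun h => (fun j => zh j h) - z) =O[𝓝[>] 0] (fun h => h ^ 3) :=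
    isBigO_pi.2 fun i => isBigO_nhdsGT_pow_of_abs_le (hCb i) (by fin_cases i <;> simp [hp])
  have hcube : Tendsto (fun h : ℝ => h ^ 3) (𝓝[>] 0) (𝓝 0) :=
    ((continuous_pow 3).tendsto' 0 0 (zero_pow three_ne_zero)).mono_left nhdsWithin_le_nhds
  -- the goal unfolds `lagrangeWeight 0 (zh · h)` and `lagrangeWeight 0 z`
  exact exists_abs_le_mul_pow_of_isBigO_nhdsGT
    (isBigO_sum_lagrangeWeight_mul_sub 0 hzinj hzh hcube htn_bdd)

/-- Perturbation estimate for the inverse Lagrange interpolation in RADAU5: perturbing the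
node values `zᵢ` by `O(h⁵), O(h³), O(h³), O(h⁵)` changes the evaluation at `0` of the cubic
inverse-interpolation polynomial (with times `t, t+c₁h, t+c₂h, t+h`) by `O(h³)`. -/
theorem stmt_8 (t c₁ c₂ : ℝ) (z : Fin 4 → ℝ)
    (hzinj : Function.Injective z) (hz0 : ∀ i, z i ≠ 0)
    (zh : Fin 4 → ℝ → ℝ) (p : Fin 4 → ℕ)
    (hp : p 0 = 5 ∧ p 1 = 3 ∧ p 2 = 3 ∧ p 3 = 5)
    (Cb : Fin 4 → ℝ)
    (hCb : ∀ i h, 0 < h → |zh i h - z i| ≤ Cb i * h ^ p i)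
    (h₁ : ℝ) (hh₁ : 0 < h₁)
    (hdist : ∀ h, 0 < h → h < h₁ →
      Function.Injective (fun i => zh i h) ∧ ∀ i, zh i h ≠ 0)
    (tn : Fin 4 → ℝ → ℝ)
    (htn : ∀ h, tn 0 h = t ∧ tn 1 h = t + c₁ * h ∧ tn 2 h = t + c₂ * h ∧ tn 3 h = t + h) :
    ∃ C h₀ : ℝ, 0 < C ∧ 0 < h₀ ∧ ∀ h, 0 < h → h < h₀ →
      |(∑ i, (∏ j ∈ Finset.univ.erase i, (0 - zh j h) / (zh i h - zh j h)) * tn i h) -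
       (∑ i, (∏ j ∈ Finset.univ.erase i, (0 - z j) / (z i - z j)) * tn i h)| ≤ C * h ^ 3 :=
  stmt_8_general t c₁ c₂ z hzinj zh p hp Cb hCb tn htn
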